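/- arXiv:1209.0194 — 2 statements merged into one kernel-verified Lean document; each statement's English description precedes it below -/
import Mathlib

section
/- For every integer N ≥ 2, let δ_N > 0 be a real number such that ĥv_x(S) ≥ δ_N · N holds for every set S of N points in the plane in general position. Then pg(N) ≤ (1/δ_N) · pg(N−1). -/
open scoped Classical

noncomputable section

/-- A point in the plane. -/
abbrev Pt : Type := ℝ × ℝ

/-- `S` is in general position: no three distinct points of `S` are collinear. -/
def GenPos (S : Finset Pt) : Prop :=
  ∀ p ∈ S, ∀ q ∈ S, ∀ r ∈ S, p ≠ q → p ≠ r → q ≠ r →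
    ¬ Collinear ℝ ({p, q, r} : Set Pt)

/-- Two straight edges cross if their relative interiors (open segments) meet. -/
def EdgesCross (e f : Sym2 Pt) : Prop :=
  ∃ a b c d : Pt, e = s(a, b) ∧ f = s(c, d) ∧
    (openSegment ℝ a b ∩ openSegment ℝ c d).Nonempty

/-- `G` is a crossing-free straight-edge (plane) graph on the point set `S`:
its edges are nondegenerate straight segments between points of `S`,
and no two distinct edges cross. -/
def IsPlaneGraph (S : Finset Pt) (G : Finset (Sym2 Pt)) : Prop :=
  (∀ e ∈ G, ¬ e.IsDiag ∧ ∀ p ∈ e, p ∈ S) ∧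
    ∀ e ∈ G, ∀ f ∈ G, e ≠ f → ¬ EdgesCross e f

/-- The (finite) collection of all plane graphs on `S`. -/
def planeGraphs (S : Finset Pt) : Finset (Finset (Sym2 Pt)) :=
  S.sym2.powerset.filter (IsPlaneGraph S)

/-- The degree of the point `p` in the graph `G`. -/
def vingDeg (G : Finset (Sym2 Pt)) (p : Pt) : ℕ :=
  (G.filter fun e => p ∈ e).card

/-- The ving `(p, G)` is an x-ving: no straight edge from `p` to another point
of `S` can be added to `G` while keeping the graph plane. -/
def IsXVing (S : Finset Pt) (G : Finset (Sym2 Pt)) (p : Pt) : Prop :=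
  ∀ q ∈ S, q ≠ p → s(p, q) ∉ G → ¬ IsPlaneGraph S (insert s(p, q) G)

/-- `v_x(G)`: the number of x-vings of `G`. -/
def vx (S : Finset Pt) (G : Finset (Sym2 Pt)) : ℕ :=
  (S.filter (IsXVing S G)).card

/-- `v_i(G)`: the number of vertices of degree exactly `i` in `G`. -/
def vdeg (S : Finset Pt) (G : Finset (Sym2 Pt)) (i : ℕ) : ℕ :=
  (S.filter fun p => vingDeg G p = i).card

/-- `ĥv_x(S)`: the average of `v_x(G)` over a uniformly random plane graph on `S`. -/
def hvx (S : Finset Pt) : ℝ :=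
  (∑ G ∈ planeGraphs S, (vx S G : ℝ)) / (planeGraphs S).card

/-- `ĥv_i(S)`: the average of `v_i(G)` over a uniformly random plane graph on `S`. -/
def hvdeg (S : Finset Pt) (i : ℕ) : ℝ :=
  (∑ G ∈ planeGraphs S, (vdeg S G i : ℝ)) / (planeGraphs S).card

/-- `pg(N)`: the maximum number of plane graphs over all sets of `N` points in
general position. -/
def pgMax (N : ℕ) : ℕ :=
  sSup {n : ℕ | ∃ S : Finset Pt, S.card = N ∧ GenPos S ∧ (planeGraphs S).card = n}

/-- The plane graphs on `S` with at most `m` edges. -/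
def planeGraphsLE (S : Finset Pt) (m : ℝ) : Finset (Finset (Sym2 Pt)) :=
  (planeGraphs S).filter fun G => (G.card : ℝ) ≤ m

/-- `ĥv_{x,m}(S)`: the average of `v_x(G)` over a uniformly random plane graph
on `S` with at most `m` edges. -/
def hvxLE (S : Finset Pt) (m : ℝ) : ℝ :=
  (∑ G ∈ planeGraphsLE S m, (vx S G : ℝ)) / (planeGraphsLE S m).card

/-- `G` has no vertex (point of `S`) of degree smaller than `i`. -/
def MinDegGe (S : Finset Pt) (G : Finset (Sym2 Pt)) (i : ℕ) : Prop :=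
  ∀ p ∈ S, i ≤ vingDeg G p

/-- The plane graphs on `S` with no vertex of degree smaller than `i`. -/
def planeGraphsDeg (S : Finset Pt) (i : ℕ) : Finset (Finset (Sym2 Pt)) :=
  (planeGraphs S).filter fun G => MinDegGe S G i

/-- The plane graphs on `S` with at most `m` edges and no vertex of degree
smaller than `i`. -/
def planeGraphsLEDeg (S : Finset Pt) (m : ℝ) (i : ℕ) : Finset (Finset (Sym2 Pt)) :=
  (planeGraphs S).filter fun G => (G.card : ℝ) ≤ m ∧ MinDegGe S G i

/-- `ĥv_{x,m}(S,i)`: the average of `v_x(G)` over a uniformly random plane graph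
on `S` with at most `m` edges and no vertex of degree smaller than `i`. -/
def hvxLEDeg (S : Finset Pt) (m : ℝ) (i : ℕ) : ℝ :=
  (∑ G ∈ planeGraphsLEDeg S m i, (vx S G : ℝ)) / (planeGraphsLEDeg S m i).card

/-- `pg(N, i)`: the maximum, over sets `S` of `N` points in general position, of
the number of plane graphs on `S` with no vertex of degree smaller than `i`. -/
def pgMaxDeg (N i : ℕ) : ℕ :=
  sSup {n : ℕ | ∃ S : Finset Pt, S.card = N ∧ GenPos S ∧ (planeGraphsDeg S i).card = n}

/-- The underlying abstract graph of `G` on the vertex set `S`. -/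
def abstractGraph (S : Finset Pt) (G : Finset (Sym2 Pt)) :
    SimpleGraph (S : Set Pt) :=
  SimpleGraph.induce (S : Set Pt) (SimpleGraph.fromEdgeSet (G : Set (Sym2 Pt)))

/-- The connected plane graphs on `S`. -/
def connPlaneGraphs (S : Finset Pt) : Finset (Finset (Sym2 Pt)) :=
  (planeGraphs S).filter fun G => (abstractGraph S G).Connected

/-- The underlying abstract graph of `G` is bi-connected (2-vertex-connected):
it is connected and remains connected after deletion of any single vertex. -/
def Biconnected (S : Finset Pt) (G : Finset (Sym2 Pt)) : Prop :=
  (abstractGraph S G).Connected ∧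
    ∀ v ∈ S, (SimpleGraph.induce ((S : Set Pt) \ {v})
      (SimpleGraph.fromEdgeSet (G : Set (Sym2 Pt)))).Connected

/-- The bi-connected plane graphs on `S`. -/
def biconnPlaneGraphs (S : Finset Pt) : Finset (Finset (Sym2 Pt)) :=
  (planeGraphs S).filter (Biconnected S)

/-- `G` is a `k`-quasi-plane graph on `S`: a straight-edge graph on `S`
(crossings allowed) with no `k` pairwise crossing edges. -/
def IsQuasiPlane (k : ℕ) (S : Finset Pt) (G : Finset (Sym2 Pt)) : Prop :=
  (∀ e ∈ G, ¬ e.IsDiag ∧ ∀ p ∈ e, p ∈ S) ∧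
    ¬ ∃ T ⊆ G, T.card = k ∧ ∀ e ∈ T, ∀ f ∈ T, e ≠ f → EdgesCross e f

/-- The (finite) collection of all `k`-quasi-plane graphs on `S`. -/
def qpGraphs (k : ℕ) (S : Finset Pt) : Finset (Finset (Sym2 Pt)) :=
  S.sym2.powerset.filter (IsQuasiPlane k S)

/-- The ving `(p, G)` is an x-ving of the `k`-quasi-plane graph `G`: no straight
edge from `p` to another point of `S` can be added to `G` without violating
`k`-quasi-planarity. -/
def IsXVingQP (k : ℕ) (S : Finset Pt) (G : Finset (Sym2 Pt)) (p : Pt) : Prop :=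
  ∀ q ∈ S, q ≠ p → s(p, q) ∉ G → ¬ IsQuasiPlane k S (insert s(p, q) G)

/-- `v_x(G)` for a `k`-quasi-plane graph `G`. -/
def vxQP (k : ℕ) (S : Finset Pt) (G : Finset (Sym2 Pt)) : ℕ :=
  (S.filter (IsXVingQP k S G)).card

/-- `ĥv_x^k(S)`: the average of `v_x(G)` over a uniformly random `k`-quasi-plane
graph on `S`. -/
def hvxQP (k : ℕ) (S : Finset Pt) : ℝ :=
  (∑ G ∈ qpGraphs k S, (vxQP k S G : ℝ)) / (qpGraphs k S).card

/-- `qp_k(N)`: the maximum number of `k`-quasi-plane graphs over all sets of `N`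
points in general position. -/
def qpMax (k N : ℕ) : ℕ :=
  sSup {n : ℕ | ∃ S : Finset Pt, S.card = N ∧ GenPos S ∧ (qpGraphs k S).card = n}

lemma edgesCross_symm {e f : Sym2 Pt} (h : EdgesCross e f) : EdgesCross f e := by
  obtain ⟨a, b, c, d, h1, h2, x, hx1, hx2⟩ := h
  exact ⟨c, d, a, b, h2, h1, x, hx2, hx1⟩

lemma openSegment_eq_of_sym2_eq {a b c d : Pt} (h : s(a, b) = s(c, d)) :
    openSegment ℝ a b = openSegment ℝ c d := by
  rcases Sym2.eq_iff.mp h with ⟨rfl, rfl⟩ | ⟨rfl, rfl⟩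
  · rfl
  · exact openSegment_symm ℝ _ _

lemma disj_openSegment {p q r : Pt} (h : ¬ Collinear ℝ ({p, q, r} : Set Pt)) :
    ¬ (openSegment ℝ p q ∩ openSegment ℝ p r).Nonempty := by
  rintro ⟨x, hx1, hx2⟩
  obtain ⟨t1, t2, ht1, ht2, hts, hx⟩ := hx1
  obtain ⟨s1, s2, hs1, hs2, hss, hx'⟩ := hx2
  apply h
  rw [collinear_iff_of_mem (Set.mem_insert p _)]
  refine ⟨r - p, fun y hy => ?_⟩
  have h1 : x - p = t2 • (q - p) := by
    have ht : t1 = 1 - t2 := by linarith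
    rw [← hx, ht]
    module
  have h2 : x - p = s2 • (r - p) := by
    have hs : s1 = 1 - s2 := by linarith
    rw [← hx', hs]
    module
  have hq : q = (t2⁻¹ * s2) • (r - p) + p := by
    have : q - p = t2⁻¹ • (x - p) := by
      rw [h1, smul_smul, inv_mul_cancel₀ ht2.ne', one_smul]
    rw [mul_smul, ← h2, ← this, sub_add_cancel]
  rcases hy with rfl | rfl | hy
  · exact ⟨0, by simp⟩
  · exact ⟨t2⁻¹ * s2, hq⟩
  · rw [Set.mem_singleton_iff] at hy
    subst hy
    exact ⟨1, by simp⟩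

lemma no_cross_shared {p q r : Pt} (h : ¬ Collinear ℝ ({p, q, r} : Set Pt)) :
    ¬ EdgesCross s(p, q) s(p, r) := by
  rintro ⟨a, b, c, d, hab, hcd, hne⟩
  rw [openSegment_eq_of_sym2_eq hab.symm, openSegment_eq_of_sym2_eq hcd.symm] at hne
  exact disj_openSegment h hne

lemma genPos_subset {S T : Finset Pt} (h : GenPos S) (hts : T ⊆ S) : GenPos T :=
  fun p hp q hq r hr => h p (hts hp) q (hts hq) r (hts hr)

lemma subset_of_xving {S : Finset Pt} (hgp : GenPos S) {p : Pt} (hp : p ∈ S)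
    {G1 G2 : Finset (Sym2 Pt)} (h1 : IsPlaneGraph S G1) (h2 : IsPlaneGraph S G2)
    (hx2 : IsXVing S G2 p)
    (hf : G1.filter (fun e => p ∉ e) = G2.filter (fun e => p ∉ e)) :
    G1 ⊆ G2 := by
  have key : ∀ q, s(p, q) ∈ G1 → s(p, q) ∈ G2 := by
    intro q he
    by_contra hq2
    have hqS : q ∈ S := (h1.1 _ he).2 q (by simp)
    have hpq : p ≠ q := fun hh => (h1.1 _ he).1 (Sym2.mk_isDiag_iff.mpr hh)
    apply hx2 q hqS hpq.symm hq2
    have main : ∀ f ∈ G2, ¬ EdgesCross s(p, q) f := by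
      intro f hfG hcross
      by_cases hpf : p ∈ f
      · obtain ⟨r, hr⟩ : ∃ r, f = s(p, r) := ⟨Sym2.Mem.other hpf, (Sym2.other_spec hpf).symm⟩
        subst hr
        have hrS : r ∈ S := (h2.1 _ hfG).2 r (by simp)
        have hpr : p ≠ r := fun hh => (h2.1 _ hfG).1 (Sym2.mk_isDiag_iff.mpr hh)
        have hqr : q ≠ r := fun hh => hq2 (hh ▸ hfG)
        exact no_cross_shared (hgp p hp q hqS r hrS hpq hpr hqr) hcross
      · have hfG1 : f ∈ G1 := by
          have : f ∈ G1.filter (fun e => p ∉ e) := by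
            rw [hf, Finset.mem_filter]; exact ⟨hfG, hpf⟩
          exact (Finset.mem_filter.mp this).1
        have hne : s(p, q) ≠ f := fun hh => hpf (hh ▸ (by simp : p ∈ s(p, q)))
        exact h1.2 _ he _ hfG1 hne hcross
    constructor
    · intro f hf'
      rcases Finset.mem_insert.mp hf' with rfl | hfG
      · exact ⟨fun hd => hpq (Sym2.mk_isDiag_iff.mp hd),
          fun x hx => by rcases Sym2.mem_iff.mp hx with rfl | rfl; exacts [hp, hqS]⟩
      · exact h2.1 f hfG
    · intro e' he' f' hf' hef
      rcases Finset.mem_insert.mp he' with rfl | heG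
      · rcases Finset.mem_insert.mp hf' with rfl | hfG
        · exact absurd rfl hef
        · exact main f' hfG
      · rcases Finset.mem_insert.mp hf' with rfl | hfG
        · exact fun hc => main e' heG (edgesCross_symm hc)
        · exact h2.2 e' heG f' hfG hef
  intro e he
  by_cases hpe : p ∈ e
  · obtain ⟨q, hq⟩ : ∃ q, e = s(p, q) := ⟨Sym2.Mem.other hpe, (Sym2.other_spec hpe).symm⟩
    subst hq
    exact key q he
  · have : e ∈ G1.filter (fun e => p ∉ e) := Finset.mem_filter.mpr ⟨he, hpe⟩
    rw [hf] at this
    exact (Finset.mem_filter.mp this).1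

lemma filter_mem_erase {S : Finset Pt} (p : Pt) {G : Finset (Sym2 Pt)}
    (hG : G ∈ planeGraphs S) :
    G.filter (fun e => p ∉ e) ∈ planeGraphs (S.erase p) := by
  rw [planeGraphs, Finset.mem_filter, Finset.mem_powerset] at hG ⊢
  obtain ⟨hsub, hpl⟩ := hG
  refine ⟨?_, ?_, ?_⟩
  · intro e he
    rw [Finset.mem_filter] at he
    rw [Finset.mem_sym2_iff]
    intro y hy
    exact Finset.mem_erase.mpr ⟨fun hh => he.2 (hh ▸ hy), (hpl.1 e he.1).2 y hy⟩
  · intro e he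
    rw [Finset.mem_filter] at he
    exact ⟨(hpl.1 e he.1).1,
      fun y hy => Finset.mem_erase.mpr ⟨fun hh => he.2 (hh ▸ hy), (hpl.1 e he.1).2 y hy⟩⟩
  · intro e he f hf' hef
    rw [Finset.mem_filter] at he hf'
    exact hpl.2 e he.1 f hf'.1 hef

lemma pgSet_bdd (M : ℕ) :
    BddAbove {n : ℕ | ∃ S : Finset Pt, S.card = M ∧ GenPos S ∧ (planeGraphs S).card = n} := by
  refine ⟨2 ^ (M + 1).choose 2, ?_⟩
  rintro n ⟨S, hS, -, rfl⟩
  calc (planeGraphs S).card ≤ S.sym2.powerset.card :=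
        Finset.card_le_card (Finset.filter_subset _ _)
    _ = 2 ^ S.sym2.card := Finset.card_powerset _
    _ = 2 ^ (M + 1).choose 2 := by rw [Finset.card_sym2, hS]

lemma empty_mem_planeGraphs (S : Finset Pt) : ∅ ∈ planeGraphs S := by
  rw [planeGraphs, Finset.mem_filter, Finset.mem_powerset]
  exact ⟨Finset.empty_subset _,
    ⟨fun e he => absurd he (Finset.notMem_empty e),
     fun e he => absurd he (Finset.notMem_empty e)⟩⟩

/-- Lemma 2.1. If `ĥv_x(S) ≥ δ_N · N` for every set `S` of `N ≥ 2`
points in general position, then `pg(N) ≤ (1/δ_N) · pg(N-1)`. -/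
theorem stmt0 (N : ℕ) (hN : 2 ≤ N) (δ : ℝ) (hδ : 0 < δ)
    (h : ∀ S : Finset Pt, S.card = N → GenPos S → δ * N ≤ hvx S) :
    (pgMax N : ℝ) ≤ (1 / δ) * pgMax (N - 1) := by
  have hNpos : (0 : ℝ) < N := by
    have : (2 : ℝ) ≤ N := by exact_mod_cast hN
    linarith
  have key : ∀ S : Finset Pt, S.card = N → GenPos S →
      ((planeGraphs S).card : ℝ) ≤ (1 / δ) * pgMax (N - 1) := by
    intro S hS hgp
    -- count per point
    have count_le : ∀ p ∈ S,
        ((planeGraphs S).filter (fun G => IsXVing S G p)).card ≤ pgMax (N - 1) := by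
      intro p hp
      have hinj : ((planeGraphs S).filter (fun G => IsXVing S G p)).card
          ≤ (planeGraphs (S.erase p)).card := by
        apply Finset.card_le_card_of_injOn (fun G => G.filter (fun e => p ∉ e))
        · intro G hG
          exact filter_mem_erase p (Finset.mem_filter.mp hG).1
        · intro G1 hG1 G2 hG2 heq
          rw [Finset.mem_coe, Finset.mem_filter] at hG1 hG2
          have hpl1 : IsPlaneGraph S G1 :=
            (Finset.mem_filter.mp hG1.1).2
          have hpl2 : IsPlaneGraph S G2 :=
            (Finset.mem_filter.mp hG2.1).2
          exact Finset.Subset.antisymm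
            (subset_of_xving hgp hp hpl1 hpl2 hG2.2 heq)
            (subset_of_xving hgp hp hpl2 hpl1 hG1.2 heq.symm)
      refine hinj.trans (le_csSup (pgSet_bdd (N - 1)) ?_)
      exact ⟨S.erase p, by rw [Finset.card_erase_of_mem hp, hS], genPos_subset hgp (Finset.erase_subset _ _), rfl⟩
    -- sum swap
    have hswap : ∑ G ∈ planeGraphs S, vx S G
        = ∑ p ∈ S, ((planeGraphs S).filter (fun G => IsXVing S G p)).card := by
      simp only [vx, Finset.card_filter]
      rw [Finset.sum_comm]
    have hsum_le : ∑ G ∈ planeGraphs S, vx S G ≤ N * pgMax (N - 1) := by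
      rw [hswap]
      calc ∑ p ∈ S, ((planeGraphs S).filter (fun G => IsXVing S G p)).card
          ≤ ∑ _p ∈ S, pgMax (N - 1) := Finset.sum_le_sum count_le
        _ = N * pgMax (N - 1) := by rw [Finset.sum_const, hS, smul_eq_mul]
    have hcpos : (0 : ℝ) < (planeGraphs S).card := by
      have := Finset.card_pos.mpr ⟨∅, empty_mem_planeGraphs S⟩
      exact_mod_cast this
    have hlow : δ * N * (planeGraphs S).card ≤ ∑ G ∈ planeGraphs S, (vx S G : ℝ) := by
      have := h S hS hgp
      rw [hvx, le_div_iff₀ hcpos] at this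
      exact this
    have hup : (∑ G ∈ planeGraphs S, (vx S G : ℝ)) ≤ (N : ℝ) * pgMax (N - 1) := by
      exact_mod_cast hsum_le
    have hmain : δ * (N : ℝ) * (planeGraphs S).card ≤ (N : ℝ) * pgMax (N - 1) :=
      hlow.trans hup
    rw [one_div, inv_mul_eq_div, le_div_iff₀ hδ]
    nlinarith [hcpos]
  by_cases hA : {n : ℕ | ∃ S : Finset Pt, S.card = N ∧ GenPos S ∧ (planeGraphs S).card = n}.Nonempty
  · obtain ⟨S, hS, hgp, hcard⟩ := Nat.sSup_mem hA (pgSet_bdd N)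
    have : (pgMax N : ℝ) = ((planeGraphs S).card : ℝ) := by
      rw [pgMax, hcard]
    rw [this]
    exact key S hS hgp
  · rw [Set.not_nonempty_iff_eq_empty] at hA
    rw [pgMax, hA]
    simp only [csSup_empty]
    norm_num
    positivity
end
end

section
/- For every set S of N points in the plane in general position, the average number of x-vings equals the average number of isolated vertices over a uniformly random plane graph on S: ĥv_x(S) = ĥv_0(S). More precisely, the map sending an x-ving (p,G) to the pair (p,G') obtained by removing from G all edges incident to p is a bijection between the set of x-vings on S and the set of pairs (p,G') with G' a plane graph on S in which p is an isolated vertex. -/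
open scoped Classical

noncomputable section

/-- Removing from `G` all edges incident to `p`. -/
def removeIncident (p : Pt) (G : Finset (Sym2 Pt)) : Finset (Sym2 Pt) :=
  G.filter fun e => p ∉ e
lemma edgesCross_iff (a b c d : Pt) :
    EdgesCross s(a,b) s(c,d) ↔ (openSegment ℝ a b ∩ openSegment ℝ c d).Nonempty := by
  constructor
  · rintro ⟨a',b',c',d', he, hf, hne⟩
    rw [Sym2.eq_iff] at he hf
    rcases he with ⟨rfl,rfl⟩|⟨rfl,rfl⟩ <;> rcases hf with ⟨rfl,rfl⟩|⟨rfl,rfl⟩ <;>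
      simpa [openSegment_symm] using hne
  · intro h; exact ⟨a,b,c,d, rfl, rfl, h⟩

lemma not_cross_shared (p q r : Pt) (h : ¬ Collinear ℝ ({p,q,r} : Set Pt)) :
    ¬ EdgesCross s(p,q) s(p,r) := by
  rw [edgesCross_iff]
  rintro ⟨x, hx1, hx2⟩
  rw [openSegment_eq_image'] at hx1 hx2
  obtain ⟨s, hs, rfl⟩ := hx1
  obtain ⟨t, ht, heq⟩ := hx2
  apply h
  rw [collinear_iff_of_mem (Set.mem_insert p _)]
  refine ⟨q - p, ?_⟩
  have h2 : s • (q - p) = t • (r - p) := by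
    simpa [add_right_cancel_iff] using heq.symm
  have ht0 : t ≠ 0 := ne_of_gt ht.1
  have hrp : r = (s / t) • (q - p) + p := by
    have h3 : r - p = (s / t) • (q - p) := by
      rw [div_eq_mul_inv, mul_comm, mul_smul, h2, inv_smul_smul₀ ht0]
    rw [← h3]; abel
  intro z hz
  simp only [Set.mem_insert_iff, Set.mem_singleton_iff] at hz
  rcases hz with rfl | rfl | hz
  · exact ⟨0, by simp⟩
  · exact ⟨1, by simp⟩
  · exact ⟨s / t, by rw [hz]; simpa using hrp⟩

def fullEdges (S : Finset Pt) (p : Pt) (G' : Finset (Sym2 Pt)) : Finset (Sym2 Pt) :=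
  ((S.erase p).filter (fun q => ∀ f ∈ G', ¬ EdgesCross s(p,q) f)).image (fun q => s(p,q))

lemma mem_fullEdges {S : Finset Pt} {p : Pt} {G' : Finset (Sym2 Pt)} {e : Sym2 Pt} :
    e ∈ fullEdges S p G' ↔
      ∃ q, q ∈ S ∧ q ≠ p ∧ (∀ f ∈ G', ¬ EdgesCross s(p,q) f) ∧ e = s(p,q) := by
  simp only [fullEdges, Finset.mem_image, Finset.mem_filter, Finset.mem_erase]
  constructor
  · rintro ⟨q, ⟨⟨hqp, hqS⟩, hnc⟩, rfl⟩; exact ⟨q, hqS, hqp, hnc, rfl⟩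
  · rintro ⟨q, hqS, hqp, hnc, rfl⟩; exact ⟨q, ⟨⟨hqp, hqS⟩, hnc⟩, rfl⟩

lemma edge_rep {S : Finset Pt} {G : Finset (Sym2 Pt)} {e : Sym2 Pt} {p : Pt}
    (hG : IsPlaneGraph S G) (he : e ∈ G) (hp : p ∈ e) :
    ∃ q ∈ S, q ≠ p ∧ e = s(p,q) := by
  induction e with
  | _ a b =>
    obtain ⟨hd, hmem⟩ := hG.1 _ he
    rw [Sym2.mem_iff] at hp
    rw [Sym2.isDiag_iff_proj_eq] at hd
    rcases hp with rfl | rfl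
    · exact ⟨b, hmem b (Sym2.mem_mk_right _ _), fun h => hd h.symm, rfl⟩
    · exact ⟨a, hmem a (Sym2.mem_mk_left _ _), fun h => hd h, Sym2.eq_swap⟩

lemma mem_removeIncident {p : Pt} {G : Finset (Sym2 Pt)} {e : Sym2 Pt} :
    e ∈ removeIncident p G ↔ e ∈ G ∧ p ∉ e := Finset.mem_filter

lemma plane_subset {S : Finset Pt} {G H : Finset (Sym2 Pt)}
    (hG : IsPlaneGraph S G) (hH : H ⊆ G) : IsPlaneGraph S H :=
  ⟨fun e he => hG.1 e (hH he), fun e he f hf => hG.2 e (hH he) f (hH hf)⟩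

lemma mem_planeGraphs {S : Finset Pt} {G : Finset (Sym2 Pt)} :
    G ∈ planeGraphs S ↔ IsPlaneGraph S G := by
  rw [planeGraphs, Finset.mem_filter, Finset.mem_powerset]
  constructor
  · exact fun h => h.2
  · intro h
    refine ⟨fun e he => ?_, h⟩
    rw [Finset.mem_sym2_iff]
    exact (h.1 e he).2

/-- Inserting an edge from `p` to `q` which crosses nothing not incident to `p`
keeps the graph plane (under general position). -/
lemma insert_plane {S : Finset Pt} {G : Finset (Sym2 Pt)} {p q : Pt}
    (hgp : GenPos S) (hG : IsPlaneGraph S G) (hp : p ∈ S) (hq : q ∈ S) (hqp : q ≠ p)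
    (hnc : ∀ f ∈ removeIncident p G, ¬ EdgesCross s(p,q) f) :
    IsPlaneGraph S (insert s(p,q) G) := by
  have key : ∀ f ∈ G, f ≠ s(p,q) → ¬ EdgesCross s(p,q) f := by
    intro f hf hfne
    by_cases hpf : p ∈ f
    · obtain ⟨r, hrS, hrp, rfl⟩ := edge_rep hG hf hpf
      have hrq : q ≠ r := by
        rintro rfl; exact hfne rfl
      exact not_cross_shared p q r (hgp p hp q hq r hrS (Ne.symm hqp) (Ne.symm hrp) hrq)
    · exact hnc f (mem_removeIncident.2 ⟨hf, hpf⟩)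
  constructor
  · intro e he
    rcases Finset.mem_insert.1 he with rfl | he
    · constructor
      · rw [Sym2.isDiag_iff_proj_eq]; exact fun h => hqp h.symm
      · intro x hx
        rcases Sym2.mem_iff.1 hx with rfl | rfl
        · exact hp
        · exact hq
    · exact hG.1 e he
  · intro e he f hf hef
    rcases Finset.mem_insert.1 he with rfl | he <;> rcases Finset.mem_insert.1 hf with rfl | hf
    · exact absurd rfl hef
    · exact key f hf (Ne.symm hef)
    · exact fun h => key e he hef (edgesCross_symm h)
    · exact hG.2 e he f hf hef

/-- Characterization of x-vings: `G` equals `G'` plus all admissible edges at `p`. -/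
lemma xving_char {S : Finset Pt} {G : Finset (Sym2 Pt)} {p : Pt}
    (hgp : GenPos S) (hp : p ∈ S) (hG : IsPlaneGraph S G) (hx : IsXVing S G p) :
    G = removeIncident p G ∪ fullEdges S p (removeIncident p G) := by
  ext e
  constructor
  · intro he
    by_cases hpe : p ∈ e
    · refine Finset.mem_union_right _ ?_
      obtain ⟨q, hqS, hqp, rfl⟩ := edge_rep hG he hpe
      refine mem_fullEdges.2 ⟨q, hqS, hqp, ?_, rfl⟩
      intro f hf
      obtain ⟨hfG, hpf⟩ := mem_removeIncident.1 hf
      exact hG.2 _ he f hfG (fun h => hpf (h ▸ Sym2.mem_mk_left p q))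
    · exact Finset.mem_union_left _ (mem_removeIncident.2 ⟨he, hpe⟩)
  · intro he
    rcases Finset.mem_union.1 he with he | he
    · exact (mem_removeIncident.1 he).1
    · obtain ⟨q, hqS, hqp, hnc, rfl⟩ := mem_fullEdges.1 he
      by_contra hne
      exact hx q hqS hqp hne (insert_plane hgp hG hp hqS hqp hnc)

/-- The inverse construction: adding all admissible edges at an isolated `p`. -/
lemma build_xving {S : Finset Pt} {G' : Finset (Sym2 Pt)} {p : Pt}
    (hgp : GenPos S) (hp : p ∈ S) (hG' : IsPlaneGraph S G') (h0 : ∀ e ∈ G', p ∉ e) :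
    IsPlaneGraph S (G' ∪ fullEdges S p G') ∧
      removeIncident p (G' ∪ fullEdges S p G') = G' ∧
      IsXVing S (G' ∪ fullEdges S p G') p := by
  set G := G' ∪ fullEdges S p G' with hGdef
  have hrem : removeIncident p G = G' := by
    ext e
    rw [mem_removeIncident, hGdef, Finset.mem_union]
    constructor
    · rintro ⟨he | he, hpe⟩
      · exact he
      · obtain ⟨q, _, _, _, rfl⟩ := mem_fullEdges.1 he
        exact absurd (Sym2.mem_mk_left p q) hpe
    · exact fun he => ⟨Or.inl he, h0 e he⟩
  have hplane : IsPlaneGraph S G := by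
    constructor
    · intro e he
      rcases Finset.mem_union.1 he with he | he
      · exact hG'.1 e he
      · obtain ⟨q, hqS, hqp, _, rfl⟩ := mem_fullEdges.1 he
        constructor
        · rw [Sym2.isDiag_iff_proj_eq]; exact fun h => hqp h.symm
        · intro x hx
          rcases Sym2.mem_iff.1 hx with rfl | rfl
          · exact hp
          · exact hqS
    · intro e he f hf hef
      rcases Finset.mem_union.1 he with he | he <;> rcases Finset.mem_union.1 hf with hf | hf
      · exact hG'.2 e he f hf hef
      · obtain ⟨q, _, _, hnc, rfl⟩ := mem_fullEdges.1 hf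
        exact fun h => hnc e he (edgesCross_symm h)
      · obtain ⟨q, _, _, hnc, rfl⟩ := mem_fullEdges.1 he
        exact hnc f hf
      · obtain ⟨q, hqS, hqp, _, rfl⟩ := mem_fullEdges.1 he
        obtain ⟨r, hrS, hrp, _, rfl⟩ := mem_fullEdges.1 hf
        have hqr : q ≠ r := by
          rintro rfl; exact hef rfl
        exact not_cross_shared p q r (hgp p hp q hqS r hrS (Ne.symm hqp) (Ne.symm hrp) hqr)
  refine ⟨hplane, hrem, ?_⟩
  intro q hqS hqp hnotin hins
  apply hnotin
  refine Finset.mem_union_right _ (mem_fullEdges.2 ⟨q, hqS, hqp, ?_, rfl⟩)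
  intro f hf
  have hfG : f ∈ insert s(p,q) G := Finset.mem_insert_of_mem (Finset.mem_union_left _ hf)
  refine hins.2 _ (Finset.mem_insert_self _ _) f hfG ?_
  rintro rfl
  exact h0 _ hf (Sym2.mem_mk_left p q)


/-- `ĥv_x(S) = ĥv_0(S)`; more precisely, the map sending an x-ving
`(p, G)` to the pair `(p, G')`, where `G'` is obtained from `G` by removing all
edges incident to `p`, is a bijection from the set of x-vings on `S` onto the
set of pairs `(p, G')` with `G'` a plane graph on `S` in which `p` is
isolated. -/
theorem stmt14 (S : Finset Pt) (hgp : GenPos S) :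
    hvx S = hvdeg S 0 ∧
    Set.BijOn (fun pg : Pt × Finset (Sym2 Pt) => (pg.1, removeIncident pg.1 pg.2))
      {pg : Pt × Finset (Sym2 Pt) |
        pg.1 ∈ S ∧ pg.2 ∈ planeGraphs S ∧ IsXVing S pg.2 pg.1}
      {pg : Pt × Finset (Sym2 Pt) |
        pg.1 ∈ S ∧ pg.2 ∈ planeGraphs S ∧ vingDeg pg.2 pg.1 = 0} := by
  have hbij : Set.BijOn (fun pg : Pt × Finset (Sym2 Pt) => (pg.1, removeIncident pg.1 pg.2))
      {pg : Pt × Finset (Sym2 Pt) |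
        pg.1 ∈ S ∧ pg.2 ∈ planeGraphs S ∧ IsXVing S pg.2 pg.1}
      {pg : Pt × Finset (Sym2 Pt) |
        pg.1 ∈ S ∧ pg.2 ∈ planeGraphs S ∧ vingDeg pg.2 pg.1 = 0} := by
    refine ⟨?_, ?_, ?_⟩
    · rintro ⟨p, G⟩ ⟨hpS, hGpg, hx⟩
      refine ⟨hpS, ?_, ?_⟩
      · exact mem_planeGraphs.2
          (plane_subset (mem_planeGraphs.1 hGpg) (Finset.filter_subset _ _))
      · show vingDeg (removeIncident p G) p = 0
        rw [vingDeg, removeIncident, Finset.filter_filter, Finset.card_eq_zero,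
          Finset.filter_eq_empty_iff]
        rintro e - ⟨h1, h2⟩
        exact h1 h2
    · rintro ⟨p, G1⟩ ⟨hp1, hG1, hx1⟩ ⟨p2, G2⟩ ⟨hp2, hG2, hx2⟩ heq
      simp only [Prod.mk.injEq] at heq
      obtain ⟨rfl, hr⟩ := heq
      have e1 := xving_char hgp hp1 (mem_planeGraphs.1 hG1) hx1
      have e2 := xving_char hgp hp2 (mem_planeGraphs.1 hG2) hx2
      dsimp only at e1 e2
      rw [Prod.mk.injEq]
      exact ⟨rfl, by rw [e1, e2, hr]⟩
    · rintro ⟨p, G'⟩ ⟨hpS, hGpg, hdeg⟩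
      have h0 : ∀ e ∈ G', p ∉ e := by
        rw [vingDeg, Finset.card_eq_zero, Finset.filter_eq_empty_iff] at hdeg
        exact hdeg
      obtain ⟨hplane, hrem, hx⟩ := build_xving hgp hpS (mem_planeGraphs.1 hGpg) h0
      refine ⟨(p, G' ∪ fullEdges S p G'), ⟨hpS, mem_planeGraphs.2 hplane, hx⟩, ?_⟩
      show (p, removeIncident p (G' ∪ fullEdges S p G')) = (p, G')
      rw [hrem]
  refine ⟨?_, hbij⟩
  set A := (S ×ˢ planeGraphs S).filter (fun pg => IsXVing S pg.2 pg.1) with hAdef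
  set B := (S ×ˢ planeGraphs S).filter (fun pg => vingDeg pg.2 pg.1 = 0) with hBdef
  have hA : {pg : Pt × Finset (Sym2 Pt) |
      pg.1 ∈ S ∧ pg.2 ∈ planeGraphs S ∧ IsXVing S pg.2 pg.1} = ↑A := by
    ext pg
    simp [hAdef, Finset.mem_product, and_assoc]
  have hB : {pg : Pt × Finset (Sym2 Pt) |
      pg.1 ∈ S ∧ pg.2 ∈ planeGraphs S ∧ vingDeg pg.2 pg.1 = 0} = ↑B := by
    ext pg
    simp [hBdef, Finset.mem_product, and_assoc]
  rw [hA, hB] at hbij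
  have hcard : A.card = B.card := by
    have h1 : (↑B : Set (Pt × Finset (Sym2 Pt)))
        = (fun pg : Pt × Finset (Sym2 Pt) => (pg.1, removeIncident pg.1 pg.2)) '' ↑A :=
      hbij.image_eq.symm
    have h2 := Set.ncard_image_of_injOn hbij.injOn
    rw [← h1] at h2
    rw [← Set.ncard_coe_finset A, ← Set.ncard_coe_finset B, h2]
  have hAsum : ∑ G ∈ planeGraphs S, vx S G = A.card := by
    rw [hAdef, Finset.card_filter, Finset.sum_product_right]
    refine Finset.sum_congr rfl fun G _ => ?_
    rw [vx, Finset.card_filter]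
  have hBsum : ∑ G ∈ planeGraphs S, vdeg S G 0 = B.card := by
    rw [hBdef, Finset.card_filter, Finset.sum_product_right]
    refine Finset.sum_congr rfl fun G _ => ?_
    rw [vdeg, Finset.card_filter]
  rw [hvx, hvdeg]
  congr 1
  rw [← Nat.cast_sum, ← Nat.cast_sum, hAsum, hBsum, hcard]
end
end
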